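/- With notation as in Theorem 1: for each k with 1 ≤ k ≤ s, the vectors g ∧ φ_{2k-1} and g ∧ φ_{2k} are eigenvectors of T = 3A³(P_g⊗I)A³ with eigenvalue 1 - |ξ_k|², i.e., T(g∧φ_{2k-1}) = (1-|ξ_k|²) g∧φ_{2k-1} and likewise for φ_{2k}. -/

import Mathlib

noncomputable section
open scoped BigOperators ComplexConjugate InnerProductSpace

/-- The 1-particle space. -/
abbrev HS (n : ℕ) := EuclideanSpace ℂ (Fin n)
/-- Model for H^{⊗2}; Λ²H sits inside as the antisymmetric tensors. -/
abbrev Sq (n : ℕ) := EuclideanSpace ℂ (Fin 2 → Fin n)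
/-- Model for H^{⊗3}; Λ³H sits inside as the antisymmetric tensors. -/
abbrev Cube (n : ℕ) := EuclideanSpace ℂ (Fin 3 → Fin n)

/-- 2-particle wedge with convention ⟨u₁∧u₂, v₁∧v₂⟩ = (1/2!)det(⟨uᵢ,vⱼ⟩). -/
def wedge2 (n : ℕ) (u v : HS n) : Sq n :=
  WithLp.toLp 2 (fun x : Fin 2 → Fin n => (2 : ℂ)⁻¹ * (u (x 0) * v (x 1) - u (x 1) * v (x 0)))

/-- The 3-particle antisymmetrizer A³ on H^{⊗3}. -/
def alt3 (n : ℕ) : Cube n →ₗ[ℂ] Cube n where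
  toFun T := WithLp.toLp 2 (fun x : Fin 3 → Fin n => (6 : ℂ)⁻¹ *
    ∑ σ : Equiv.Perm (Fin 3), ((Equiv.Perm.sign σ : ℤ) : ℂ) * T (x ∘ σ))
  map_add' T S := by
    ext x
    simp [PiLp.add_apply, mul_add, Finset.sum_add_distrib]
  map_smul' c T := by
    ext x
    simp [PiLp.smul_apply, Finset.mul_sum, smul_eq_mul]
    apply Finset.sum_congr rfl
    intro σ _
    ring

/-- 3-particle wedge with convention ⟨u₁∧u₂∧u₃, v₁∧v₂∧v₃⟩ = (1/3!)det(⟨uᵢ,vⱼ⟩). -/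
def wedge3 (n : ℕ) (u v w : HS n) : Cube n :=
  WithLp.toLp 2 (fun x : Fin 3 → Fin n => (6 : ℂ)⁻¹ * ∑ σ : Equiv.Perm (Fin 3),
    ((Equiv.Perm.sign σ : ℤ) : ℂ) * (u (x (σ 0)) * v (x (σ 1)) * w (x (σ 2))))

/-- Wedge of a 2-particle function with a 1-particle function: g ∧ φ = A³(g ⊗ φ). -/
def wedgeSV (n : ℕ) (g : Sq n) (v : HS n) : Cube n :=
  alt3 n (WithLp.toLp 2 (fun x : Fin 3 → Fin n => g ![x 0, x 1] * v (x 2)))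

/-- P²_g ⊗ I¹ acting on H^{⊗3}. -/
def pgI (n : ℕ) (g : Sq n) : Cube n →ₗ[ℂ] Cube n where
  toFun T := WithLp.toLp 2 (fun x : Fin 3 → Fin n => g ![x 0, x 1] *
    ∑ y : Fin 2 → Fin n, conj (g y) * T ![y 0, y 1, x 2])
  map_add' T S := by
    ext x
    simp [PiLp.add_apply, mul_add, Finset.sum_add_distrib]
  map_smul' c T := by
    ext x
    simp [PiLp.smul_apply, Finset.mul_sum, smul_eq_mul]
    apply Finset.sum_congr rfl
    intro y _
    ring

/-- The operator 3P²_g ∧ I¹ = 3A³(P²_g ⊗ I¹)A³ (as an operator on H^{⊗3}; it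
vanishes on the orthogonal complement of Λ³H and restricts to Λ³H). -/
def T3 (n : ℕ) (g : Sq n) : Cube n →ₗ[ℂ] Cube n :=
  (3 : ℂ) • (alt3 n ∘ₗ pgI n g ∘ₗ alt3 n)

namespace Stmt14Aux

lemma perm3univ : (Finset.univ : Finset (Equiv.Perm (Fin 3))) =
    {Equiv.refl (Fin 3), Equiv.swap 0 1, Equiv.swap 0 2, Equiv.swap 1 2,
     Equiv.swap 0 1 * Equiv.swap 1 2, Equiv.swap 1 2 * Equiv.swap 0 1} := by decide

lemma sum_perm3 (F : Equiv.Perm (Fin 3) → ℂ) :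
    ∑ σ : Equiv.Perm (Fin 3), F σ =
      F (Equiv.refl _) + F (Equiv.swap 0 1) + F (Equiv.swap 0 2) + F (Equiv.swap 1 2)
      + F (Equiv.swap 0 1 * Equiv.swap 1 2) + F (Equiv.swap 1 2 * Equiv.swap 0 1) := by
  rw [perm3univ]
  rw [Finset.sum_insert (by decide), Finset.sum_insert (by decide),
    Finset.sum_insert (by decide), Finset.sum_insert (by decide),
    Finset.sum_insert (by decide), Finset.sum_singleton]
  ring

lemma wedgeSV_apply {n : ℕ} (g : Sq n) (hg : ∀ a b, g ![b, a] = - g ![a, b]) (v : HS n)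
    (a b c : Fin n) :
    wedgeSV n g v ![a, b, c] =
      (3:ℂ)⁻¹ * (g ![a, b] * v c - g ![a, c] * v b + g ![b, c] * v a) := by
  simp only [wedgeSV, alt3, LinearMap.coe_mk, AddHom.coe_mk]
  show (6:ℂ)⁻¹ * ∑ σ : Equiv.Perm (Fin 3), _ = _
  rw [sum_perm3]
  simp only [Function.comp, Equiv.refl_apply, Equiv.Perm.coe_mul, Equiv.swap_apply_def]
  simp [Matrix.vecHead, Matrix.vecTail]
  rw [hg a b, hg b c, hg a c]
  ring

lemma sign_sq (σ : Equiv.Perm (Fin 3)) :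
    ((Equiv.Perm.sign σ : ℤ) : ℂ) * ((Equiv.Perm.sign σ : ℤ) : ℂ) = 1 := by
  rcases Int.units_eq_one_or (Equiv.Perm.sign σ) with h | h <;> rw [h] <;> norm_num

lemma alt3_comp_perm {n : ℕ} (T : Cube n) (x : Fin 3 → Fin n) (σ : Equiv.Perm (Fin 3)) :
    alt3 n T (x ∘ σ) = ((Equiv.Perm.sign σ : ℤ) : ℂ) * alt3 n T x := by
  show (6:ℂ)⁻¹ * ∑ τ : Equiv.Perm (Fin 3), ((Equiv.Perm.sign τ : ℤ) : ℂ) * T ((x ∘ σ) ∘ τ)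
      = ((Equiv.Perm.sign σ : ℤ) : ℂ) * ((6:ℂ)⁻¹ * ∑ τ : Equiv.Perm (Fin 3),
          ((Equiv.Perm.sign τ : ℤ) : ℂ) * T (x ∘ τ))
  have reind : ∑ τ : Equiv.Perm (Fin 3), ((Equiv.Perm.sign τ : ℤ) : ℂ) * T ((x ∘ σ) ∘ τ)
      = ∑ τ : Equiv.Perm (Fin 3), ((Equiv.Perm.sign σ : ℤ) : ℂ) *
          (((Equiv.Perm.sign τ : ℤ) : ℂ) * T (x ∘ τ)) := by
    apply Fintype.sum_equiv (Equiv.mulLeft σ)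
    intro τ
    have h1 : (x ∘ σ) ∘ τ = x ∘ (σ * τ : Equiv.Perm (Fin 3)) := by
      funext j; rfl
    have h2 : ((Equiv.Perm.sign τ : ℤ) : ℂ)
        = ((Equiv.Perm.sign σ : ℤ) : ℂ) * ((Equiv.Perm.sign (σ * τ) : ℤ) : ℂ) := by
      rw [map_mul]
      push_cast [Units.val_mul]
      rw [← mul_assoc, sign_sq, one_mul]
    rw [h1, h2, Equiv.coe_mulLeft]
    ring
  rw [reind, ← Finset.mul_sum]
  ring

lemma alt3_idem {n : ℕ} (T : Cube n) : alt3 n (alt3 n T) = alt3 n T := by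
  ext x
  show (6:ℂ)⁻¹ * ∑ σ : Equiv.Perm (Fin 3),
      ((Equiv.Perm.sign σ : ℤ) : ℂ) * alt3 n T (x ∘ σ) = alt3 n T x
  have : ∀ σ : Equiv.Perm (Fin 3),
      ((Equiv.Perm.sign σ : ℤ) : ℂ) * alt3 n T (x ∘ σ) = alt3 n T x := by
    intro σ
    rw [alt3_comp_perm, ← mul_assoc, sign_sq, one_mul]
  rw [Finset.sum_congr rfl fun σ _ => this σ, Finset.sum_const]
  rw [show (Finset.univ : Finset (Equiv.Perm (Fin 3))).card = 6 from by decide]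
  simp

lemma sum_fin2 {α M : Type*} [Fintype α] [AddCommMonoid M] (F : (Fin 2 → α) → M) :
    ∑ y, F y = ∑ a, ∑ b, F ![a, b] := by
  have h := Fintype.sum_equiv (finTwoArrowEquiv α).symm (fun p => F ![p.1, p.2]) F
    (fun p => by simp [finTwoArrowEquiv])
  rw [← h, Fintype.sum_prod_type]

lemma sum_swap4 {α β : Type*} [Fintype α] [Fintype β] (f : α → α → β → β → ℂ) :
    ∑ a, ∑ b, ∑ i, ∑ j, f a b i j = ∑ i, ∑ j, ∑ a, ∑ b, f a b i j :=
  calc ∑ a, ∑ b, ∑ i, ∑ j, f a b i j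
      = ∑ a, ∑ i, ∑ b, ∑ j, f a b i j :=
        Finset.sum_congr rfl fun _ _ => Finset.sum_comm
    _ = ∑ i, ∑ a, ∑ b, ∑ j, f a b i j := Finset.sum_comm
    _ = ∑ i, ∑ a, ∑ j, ∑ b, f a b i j :=
        Finset.sum_congr rfl fun _ _ => Finset.sum_congr rfl fun _ _ => Finset.sum_comm
    _ = ∑ i, ∑ j, ∑ a, ∑ b, f a b i j :=
        Finset.sum_congr rfl fun _ _ => Finset.sum_comm

lemma dsum_factor2 {n : ℕ} (P Q : Fin n → ℂ) :
    ∑ a, ∑ b, P a * Q b = (∑ a, P a) * (∑ b, Q b) := by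
  rw [Finset.sum_mul_sum]

lemma dsum_factor {n : ℕ} (P Q : Fin n → ℂ) (C : ℂ) :
    ∑ a, ∑ b, P a * (Q b * C) = (∑ a, P a) * (∑ b, Q b) * C := by
  simp only [← Finset.mul_sum, ← Finset.sum_mul]
  ring

lemma conj_mul_self (z : ℂ) : conj z * z = ((‖z‖ ^ 2 : ℝ) : ℂ) := by
  rw [mul_comm, Complex.mul_conj']
  push_cast
  ring


lemma eigen {n s : ℕ} (ξ : Fin s → ℂ) (hξ : ∑ i, ‖ξ i‖ ^ 2 = 1) (k : Fin s)
    (u w : Fin s → HS n) (v : HS n) (g : Sq n)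
    (hgdef : ∀ y : Fin 2 → Fin n, g y = ((Real.sqrt 2 : ℂ) * 2⁻¹) *
        ∑ i, ξ i * (u i (y 0) * w i (y 1) - u i (y 1) * w i (y 0)))
    (huu : ∀ i j, ∑ a, conj (u i a) * u j a = if i = j then 1 else 0)
    (hww : ∀ i j, ∑ a, conj (w i a) * w j a = if i = j then 1 else 0)
    (huw : ∀ i j, ∑ a, conj (u i a) * w j a = 0)
    (hwu : ∀ i j, ∑ a, conj (w i a) * u j a = 0)
    (hv : ∀ (i : Fin s) (c : Fin n),
        (∑ a, conj (u i a) * v a) * u i c + (∑ a, conj (w i a) * v a) * w i c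
          = if i = k then v c else 0) :
    T3 n g (wedgeSV n g v) = ((1 - ‖ξ k‖ ^ 2 : ℝ) : ℂ) • wedgeSV n g v := by
  set c0 : ℂ := (Real.sqrt 2 : ℂ) * 2⁻¹ with hc0def
  have hsq2 : (Real.sqrt 2 : ℂ) * (Real.sqrt 2 : ℂ) = 2 := by
    rw [← Complex.ofReal_mul, Real.mul_self_sqrt (by norm_num)]
    norm_num
  have hc0 : c0 * c0 = 2⁻¹ := by
    rw [hc0def, mul_mul_mul_comm, hsq2]
    norm_num
  have hc0c : conj c0 = c0 := by
    have h2 : (starRingEnd ℂ) (2:ℂ) = 2 := by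
      rw [show (2:ℂ) = ((2:ℝ):ℂ) from by norm_num, Complex.conj_ofReal]
    rw [hc0def, map_mul, Complex.conj_ofReal, map_inv₀, h2]
  have hG : ∀ a b : Fin n, g ![a, b]
      = c0 * ∑ i, ξ i * (u i a * w i b - u i b * w i a) := by
    intro a b
    rw [hgdef, ← hc0def]
    simp only [Matrix.cons_val_zero, Matrix.cons_val_one, Matrix.head_cons]
  have gA : ∀ a b : Fin n, g ![b, a] = - g ![a, b] := by
    intro a b
    rw [hG, hG]
    have h1 : ∀ i : Fin s, ξ i * (u i b * w i a - u i a * w i b)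
        = -(ξ i * (u i a * w i b - u i b * w i a)) := fun i => by ring
    rw [Finset.sum_congr rfl fun i _ => h1 i, Finset.sum_neg_distrib]
    ring
  have hGc : ∀ a b : Fin n, conj (g ![a, b])
      = c0 * ∑ i, conj (ξ i) * conj (u i a * w i b - u i b * w i a) := by
    intro a b
    rw [hG, map_mul, map_sum, hc0c]
    congr 1
    exact Finset.sum_congr rfl fun i _ => by rw [map_mul]
  -- Gram computations
  have E1 : ∀ i j : Fin s,
      (∑ a, ∑ b, conj (u i a * w i b - u i b * w i a) * (u j a * w j b - u j b * w j a))
        = if i = j then 2 else 0 := by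
    intro i j
    have expand : ∀ a b : Fin n,
        conj (u i a * w i b - u i b * w i a) * (u j a * w j b - u j b * w j a)
        = (conj (u i a) * u j a) * (conj (w i b) * w j b)
          - (conj (u i a) * w j a) * (conj (w i b) * u j b)
          - (conj (w i a) * u j a) * (conj (u i b) * w j b)
          + (conj (w i a) * w j a) * (conj (u i b) * u j b) := by
      intro a b
      simp only [map_sub, map_mul]
      ring
    rw [Finset.sum_congr rfl fun a _ => Finset.sum_congr rfl fun b _ => expand a b]
    simp only [Finset.sum_add_distrib, Finset.sum_sub_distrib]
    rw [dsum_factor2, dsum_factor2, dsum_factor2, dsum_factor2,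
      huu i j, hww i j, huw i j, hwu i j]
    by_cases h : i = j
    · simp [h]
      norm_num
    · simp [h]
  have E2 : ∀ (i j : Fin s) (c : Fin n),
      (∑ a, ∑ b, conj (u i a * w i b - u i b * w i a)
          * ((u j a * w j c - u j c * w j a) * v b))
        = if i = j then (if i = k then v c else 0) else 0 := by
    intro i j c
    have expand : ∀ a b : Fin n,
        conj (u i a * w i b - u i b * w i a) * ((u j a * w j c - u j c * w j a) * v b)
        = (conj (u i a) * u j a) * ((conj (w i b) * v b) * (w j c))
          - (conj (u i a) * w j a) * ((conj (w i b) * v b) * (u j c))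
          - (conj (w i a) * u j a) * ((conj (u i b) * v b) * (w j c))
          + (conj (w i a) * w j a) * ((conj (u i b) * v b) * (u j c)) := by
      intro a b
      simp only [map_sub, map_mul]
      ring
    rw [Finset.sum_congr rfl fun a _ => Finset.sum_congr rfl fun b _ => expand a b]
    simp only [Finset.sum_add_distrib, Finset.sum_sub_distrib]
    rw [dsum_factor, dsum_factor, dsum_factor, dsum_factor,
      huu i j, hww i j, huw i j, hwu i j]
    by_cases h : i = j
    · rw [if_pos h, if_pos h, ← h, ← hv i c]
      ring
    · rw [if_neg h, if_neg h]
      ring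
  -- the three S-sums
  have hS1 : (∑ a, ∑ b, conj (g ![a, b]) * g ![a, b]) = 1 := by
    have expand : ∀ a b : Fin n, conj (g ![a, b]) * g ![a, b]
        = ∑ i, ∑ j, (conj (ξ i) * ξ j * (c0 * c0))
            * (conj (u i a * w i b - u i b * w i a)
                * (u j a * w j b - u j b * w j a)) := by
      intro a b
      rw [hGc, hG, mul_mul_mul_comm, Finset.sum_mul_sum]
      rw [Finset.mul_sum]
      refine Finset.sum_congr rfl fun i _ => ?_
      rw [Finset.mul_sum]
      exact Finset.sum_congr rfl fun j _ => by ring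
    rw [Finset.sum_congr rfl fun a _ => Finset.sum_congr rfl fun b _ => expand a b]
    rw [sum_swap4]
    have inner : ∀ i j : Fin s,
        (∑ a, ∑ b, (conj (ξ i) * ξ j * (c0 * c0))
            * (conj (u i a * w i b - u i b * w i a)
                * (u j a * w j b - u j b * w j a)))
        = (conj (ξ i) * ξ j * (c0 * c0)) * (if i = j then 2 else 0) := by
      intro i j
      rw [← E1 i j, Finset.mul_sum]
      exact Finset.sum_congr rfl fun a _ => by rw [Finset.mul_sum]
    rw [Finset.sum_congr rfl fun i _ => Finset.sum_congr rfl fun j _ => inner i j]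
    have collapse : ∀ i : Fin s,
        (∑ j, (conj (ξ i) * ξ j * (c0 * c0)) * (if i = j then 2 else 0))
        = conj (ξ i) * ξ i * (c0 * c0) * 2 := by
      intro i
      rw [Finset.sum_eq_single i (fun j _ hj => by simp [Ne.symm hj])
        (fun h => absurd (Finset.mem_univ i) h)]
      simp
    rw [Finset.sum_congr rfl fun i _ => collapse i]
    have : ∀ i : Fin s, conj (ξ i) * ξ i * (c0 * c0) * 2 = ((‖ξ i‖ ^ 2 : ℝ) : ℂ) := by
      intro i
      rw [conj_mul_self, hc0]
      ring
    rw [Finset.sum_congr rfl fun i _ => this i]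
    rw [← Complex.ofReal_sum]
    rw [hξ]
    norm_num
  have hS2 : ∀ c : Fin n,
      (∑ a, ∑ b, conj (g ![a, b]) * (g ![a, c] * v b))
        = 2⁻¹ * ((‖ξ k‖ ^ 2 : ℝ) : ℂ) * v c := by
    intro c
    have expand : ∀ a b : Fin n, conj (g ![a, b]) * (g ![a, c] * v b)
        = ∑ i, ∑ j, (conj (ξ i) * ξ j * (c0 * c0))
            * (conj (u i a * w i b - u i b * w i a)
                * ((u j a * w j c - u j c * w j a) * v b)) := by
      intro a b
      rw [hGc, hG]
      rw [show (c0 * ∑ i, conj (ξ i) * conj (u i a * w i b - u i b * w i a))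
            * ((c0 * ∑ j, ξ j * (u j a * w j c - u j c * w j a)) * v b)
          = (c0 * c0 * v b) * ((∑ i, conj (ξ i) * conj (u i a * w i b - u i b * w i a))
            * (∑ j, ξ j * (u j a * w j c - u j c * w j a))) from by ring]
      rw [Finset.sum_mul_sum, Finset.mul_sum]
      refine Finset.sum_congr rfl fun i _ => ?_
      rw [Finset.mul_sum]
      exact Finset.sum_congr rfl fun j _ => by ring
    rw [Finset.sum_congr rfl fun a _ => Finset.sum_congr rfl fun b _ => expand a b]
    rw [sum_swap4]
    have inner : ∀ i j : Fin s,
        (∑ a, ∑ b, (conj (ξ i) * ξ j * (c0 * c0))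
            * (conj (u i a * w i b - u i b * w i a)
                * ((u j a * w j c - u j c * w j a) * v b)))
        = (conj (ξ i) * ξ j * (c0 * c0))
            * (if i = j then (if i = k then v c else 0) else 0) := by
      intro i j
      rw [← E2 i j c, Finset.mul_sum]
      exact Finset.sum_congr rfl fun a _ => by rw [Finset.mul_sum]
    rw [Finset.sum_congr rfl fun i _ => Finset.sum_congr rfl fun j _ => inner i j]
    have collapse : ∀ i : Fin s,
        (∑ j, (conj (ξ i) * ξ j * (c0 * c0))
            * (if i = j then (if i = k then v c else 0) else 0))
        = conj (ξ i) * ξ i * (c0 * c0) * (if i = k then v c else 0) := by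
      intro i
      rw [Finset.sum_eq_single i (fun j _ hj => by simp [Ne.symm hj])
        (fun h => absurd (Finset.mem_univ i) h)]
      simp
    rw [Finset.sum_congr rfl fun i _ => collapse i]
    rw [Finset.sum_eq_single k (fun i _ hi => by simp [hi]) 
      (fun h => absurd (Finset.mem_univ k) h)]
    rw [if_pos rfl, conj_mul_self, hc0]
    ring
  have hS3 : ∀ c : Fin n,
      (∑ a, ∑ b, conj (g ![a, b]) * (g ![b, c] * v a))
        = -(2⁻¹ * ((‖ξ k‖ ^ 2 : ℝ) : ℂ) * v c) := by
    intro c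
    rw [Finset.sum_comm]
    have flip : ∀ b a : Fin n, conj (g ![a, b]) * (g ![b, c] * v a)
        = -(conj (g ![b, a]) * (g ![b, c] * v a)) := by
      intro b a
      rw [gA a b, map_neg]
      ring
    rw [Finset.sum_congr rfl fun b _ => Finset.sum_congr rfl fun a _ => flip b a]
    rw [Finset.sum_congr rfl fun b (_ : b ∈ Finset.univ) => Finset.sum_neg_distrib _,
      Finset.sum_neg_distrib _]
    rw [hS2 c]
  have key : ∀ c : Fin n,
      (∑ y : Fin 2 → Fin n, conj (g y) * wedgeSV n g v ![y 0, y 1, c])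
        = 3⁻¹ * ((1 - ‖ξ k‖ ^ 2 : ℝ) : ℂ) * v c := by
    intro c
    rw [sum_fin2]
    have pt : ∀ a b : Fin n,
        conj (g ![a, b]) * wedgeSV n g v ![(![a, b]) 0, (![a, b]) 1, c]
        = 3⁻¹ * (conj (g ![a, b]) * g ![a, b] * v c
            - conj (g ![a, b]) * (g ![a, c] * v b)
            + conj (g ![a, b]) * (g ![b, c] * v a)) := by
      intro a b
      simp only [Matrix.cons_val_zero, Matrix.cons_val_one, Matrix.head_cons]
      rw [wedgeSV_apply g gA v a b c]
      ring
    rw [Finset.sum_congr rfl fun a _ => Finset.sum_congr rfl fun b _ => pt a b]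
    have h3 : (∑ a, ∑ b, 3⁻¹ * (conj (g ![a, b]) * g ![a, b] * v c
            - conj (g ![a, b]) * (g ![a, c] * v b)
            + conj (g ![a, b]) * (g ![b, c] * v a)))
        = 3⁻¹ * ((∑ a, ∑ b, conj (g ![a, b]) * g ![a, b] * v c)
            - (∑ a, ∑ b, conj (g ![a, b]) * (g ![a, c] * v b))
            + (∑ a, ∑ b, conj (g ![a, b]) * (g ![b, c] * v a))) := by
      simp only [mul_sub, mul_add, Finset.mul_sum, Finset.sum_sub_distrib,
        Finset.sum_add_distrib]
    rw [h3]
    rw [show (∑ a, ∑ b, conj (g ![a, b]) * g ![a, b] * v c)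
        = (∑ a, ∑ b, conj (g ![a, b]) * g ![a, b]) * v c from by
      rw [Finset.sum_mul]
      exact Finset.sum_congr rfl fun a _ => by rw [Finset.sum_mul]]
    rw [hS1, hS2 c, hS3 c]
    push_cast
    ring
  have hWidem : alt3 n (wedgeSV n g v) = wedgeSV n g v := by unfold wedgeSV; exact alt3_idem _
  have hpgI : pgI n g (wedgeSV n g v)
      = ((3:ℂ)⁻¹ * ((1 - ‖ξ k‖ ^ 2 : ℝ) : ℂ))
          • (WithLp.toLp 2 (fun x => g ![x 0, x 1] * v (x 2)) : Cube n) := by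
    ext x
    show g ![x 0, x 1] * (∑ y, conj (g y) * wedgeSV n g v ![y 0, y 1, x 2]) = _
    rw [key (x 2)]
    show g ![x 0, x 1] * (3⁻¹ * ((1 - ‖ξ k‖ ^ 2 : ℝ) : ℂ) * v (x 2))
        = ((3:ℂ)⁻¹ * ((1 - ‖ξ k‖ ^ 2 : ℝ) : ℂ)) * (g ![x 0, x 1] * v (x 2))
    ring
  show (3:ℂ) • (alt3 n (pgI n g (alt3 n (wedgeSV n g v))))
      = ((1 - ‖ξ k‖ ^ 2 : ℝ) : ℂ) • wedgeSV n g v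
  rw [hWidem, hpgI, map_smul]
  show (3:ℂ) • (((3:ℂ)⁻¹ * ((1 - ‖ξ k‖ ^ 2 : ℝ) : ℂ)) • wedgeSV n g v)
      = ((1 - ‖ξ k‖ ^ 2 : ℝ) : ℂ) • wedgeSV n g v
  rw [smul_smul, show (3:ℂ) * ((3:ℂ)⁻¹ * ((1 - ‖ξ k‖ ^ 2 : ℝ) : ℂ))
      = ((1 - ‖ξ k‖ ^ 2 : ℝ) : ℂ) from by rw [← mul_assoc]; norm_num]

end Stmt14Aux

/-- g ∧ φ_{2k-1} and g ∧ φ_{2k} are eigenvectors of T with eigenvalue 1 - |ξ_k|². -/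
theorem stmt14 (n s : ℕ) (hsn : 2 * s ≤ n) (φ : Fin n → HS n)
    (hφ : Orthonormal ℂ φ) (ξ : Fin s → ℂ) (hξ : ∑ i, ‖ξ i‖ ^ 2 = 1)
    (k : Fin s) :
    let g : Sq n := ∑ i : Fin s, ξ i • ((Real.sqrt 2 : ℂ) •
      wedge2 n (φ ⟨2 * (i : ℕ), by have := i.isLt; omega⟩)
        (φ ⟨2 * (i : ℕ) + 1, by have := i.isLt; omega⟩));
    T3 n g (wedgeSV n g (φ ⟨2 * (k : ℕ), by have := k.isLt; omega⟩))
      = ((1 - ‖ξ k‖ ^ 2 : ℝ) : ℂ) •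
        wedgeSV n g (φ ⟨2 * (k : ℕ), by have := k.isLt; omega⟩) ∧
    T3 n g (wedgeSV n g (φ ⟨2 * (k : ℕ) + 1, by have := k.isLt; omega⟩))
      = ((1 - ‖ξ k‖ ^ 2 : ℝ) : ℂ) •
        wedgeSV n g (φ ⟨2 * (k : ℕ) + 1, by have := k.isLt; omega⟩) := by

  intro g
  have ipφ : ∀ p q : Fin n, (∑ a, conj (φ p a) * φ q a) = if p = q then 1 else 0 := by
    intro p q
    have h := orthonormal_iff_ite.mp hφ p q
    rw [PiLp.inner_apply] at h
    simp [RCLike.inner_apply] at h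
    rw [← h]
    exact Finset.sum_congr rfl fun _ _ => mul_comm _ _
  have hgdef : ∀ y : Fin 2 → Fin n, g y = ((Real.sqrt 2 : ℂ) * 2⁻¹) *
      ∑ i : Fin s, ξ i * (φ (⟨2 * (i : ℕ), by have := i.isLt; omega⟩ : Fin n) (y 0)
          * φ (⟨2 * (i : ℕ) + 1, by have := i.isLt; omega⟩ : Fin n) (y 1)
        - φ (⟨2 * (i : ℕ), by have := i.isLt; omega⟩ : Fin n) (y 1)
          * φ (⟨2 * (i : ℕ) + 1, by have := i.isLt; omega⟩ : Fin n) (y 0)) := by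
    intro y
    show (∑ i : Fin s, ξ i • ((Real.sqrt 2 : ℂ) •
      wedge2 n (φ ⟨2 * (i : ℕ), by have := i.isLt; omega⟩)
        (φ ⟨2 * (i : ℕ) + 1, by have := i.isLt; omega⟩))) y = _
    rw [WithLp.ofLp_sum, Finset.sum_apply, Finset.mul_sum]
    refine Finset.sum_congr rfl fun i _ => ?_
    show ξ i * ((Real.sqrt 2 : ℂ) * ((2:ℂ)⁻¹ *
        (φ (⟨2 * (i : ℕ), by have := i.isLt; omega⟩ : Fin n) (y 0)
          * φ (⟨2 * (i : ℕ) + 1, by have := i.isLt; omega⟩ : Fin n) (y 1)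
        - φ (⟨2 * (i : ℕ), by have := i.isLt; omega⟩ : Fin n) (y 1)
          * φ (⟨2 * (i : ℕ) + 1, by have := i.isLt; omega⟩ : Fin n) (y 0)))) = _
    ring
  have huu : ∀ i j : Fin s,
      (∑ a, conj (φ (⟨2 * (i : ℕ), by have := i.isLt; omega⟩ : Fin n) a)
        * φ (⟨2 * (j : ℕ), by have := j.isLt; omega⟩ : Fin n) a) = if i = j then 1 else 0 := by
    intro i j
    rw [ipφ]
    exact if_congr (by simp only [Fin.ext_iff]; omega) rfl rfl
  have hww : ∀ i j : Fin s,
      (∑ a, conj (φ (⟨2 * (i : ℕ) + 1, by have := i.isLt; omega⟩ : Fin n) a)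
        * φ (⟨2 * (j : ℕ) + 1, by have := j.isLt; omega⟩ : Fin n) a) = if i = j then 1 else 0 := by
    intro i j
    rw [ipφ]
    exact if_congr (by simp only [Fin.ext_iff]; omega) rfl rfl
  have huw : ∀ i j : Fin s,
      (∑ a, conj (φ (⟨2 * (i : ℕ), by have := i.isLt; omega⟩ : Fin n) a)
        * φ (⟨2 * (j : ℕ) + 1, by have := j.isLt; omega⟩ : Fin n) a) = 0 := by
    intro i j
    rw [ipφ, if_neg (by simp only [Fin.ext_iff]; omega)]
  have hwu : ∀ i j : Fin s,
      (∑ a, conj (φ (⟨2 * (i : ℕ) + 1, by have := i.isLt; omega⟩ : Fin n) a)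
        * φ (⟨2 * (j : ℕ), by have := j.isLt; omega⟩ : Fin n) a) = 0 := by
    intro i j
    rw [ipφ, if_neg (by simp only [Fin.ext_iff]; omega)]
  constructor
  · refine Stmt14Aux.eigen ξ hξ k
      (fun i => φ ⟨2 * (i : ℕ), by have := i.isLt; omega⟩)
      (fun i => φ ⟨2 * (i : ℕ) + 1, by have := i.isLt; omega⟩)
      (φ ⟨2 * (k : ℕ), by have := k.isLt; omega⟩) g hgdef huu hww huw hwu ?_
    intro i c
    show (∑ a, conj (φ (⟨2 * (i : ℕ), by have := i.isLt; omega⟩ : Fin n) a)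
          * φ (⟨2 * (k : ℕ), by have := k.isLt; omega⟩ : Fin n) a)
        * φ (⟨2 * (i : ℕ), by have := i.isLt; omega⟩ : Fin n) c
      + (∑ a, conj (φ (⟨2 * (i : ℕ) + 1, by have := i.isLt; omega⟩ : Fin n) a)
          * φ (⟨2 * (k : ℕ), by have := k.isLt; omega⟩ : Fin n) a)
        * φ (⟨2 * (i : ℕ) + 1, by have := i.isLt; omega⟩ : Fin n) c
      = if i = k then φ (⟨2 * (k : ℕ), by have := k.isLt; omega⟩ : Fin n) c else 0
    rw [ipφ, ipφ]
    have hne1 : (⟨2 * (i : ℕ) + 1, by have := i.isLt; omega⟩ : Fin n)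
        ≠ (⟨2 * (k : ℕ), by have := k.isLt; omega⟩ : Fin n) := by
      simp only [ne_eq, Fin.ext_iff]
      omega
    rw [if_neg hne1]
    by_cases h : i = k
    · have heq : (⟨2 * (i : ℕ), by have := i.isLt; omega⟩ : Fin n)
          = (⟨2 * (k : ℕ), by have := k.isLt; omega⟩ : Fin n) := by
        simp only [Fin.ext_iff, h]
      rw [if_pos heq, if_pos h, h]
      ring
    · have hne2 : (⟨2 * (i : ℕ), by have := i.isLt; omega⟩ : Fin n)
          ≠ (⟨2 * (k : ℕ), by have := k.isLt; omega⟩ : Fin n) := by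
        simp only [ne_eq, Fin.ext_iff]
        intro hc
        exact h (Fin.ext (by omega))
      rw [if_neg hne2, if_neg h]
      ring
  · refine Stmt14Aux.eigen ξ hξ k
      (fun i => φ ⟨2 * (i : ℕ), by have := i.isLt; omega⟩)
      (fun i => φ ⟨2 * (i : ℕ) + 1, by have := i.isLt; omega⟩)
      (φ ⟨2 * (k : ℕ) + 1, by have := k.isLt; omega⟩) g hgdef huu hww huw hwu ?_
    intro i c
    show (∑ a, conj (φ (⟨2 * (i : ℕ), by have := i.isLt; omega⟩ : Fin n) a)
          * φ (⟨2 * (k : ℕ) + 1, by have := k.isLt; omega⟩ : Fin n) a)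
        * φ (⟨2 * (i : ℕ), by have := i.isLt; omega⟩ : Fin n) c
      + (∑ a, conj (φ (⟨2 * (i : ℕ) + 1, by have := i.isLt; omega⟩ : Fin n) a)
          * φ (⟨2 * (k : ℕ) + 1, by have := k.isLt; omega⟩ : Fin n) a)
        * φ (⟨2 * (i : ℕ) + 1, by have := i.isLt; omega⟩ : Fin n) c
      = if i = k then φ (⟨2 * (k : ℕ) + 1, by have := k.isLt; omega⟩ : Fin n) c else 0
    rw [ipφ, ipφ]
    have hne1 : (⟨2 * (i : ℕ), by have := i.isLt; omega⟩ : Fin n)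
        ≠ (⟨2 * (k : ℕ) + 1, by have := k.isLt; omega⟩ : Fin n) := by
      simp only [ne_eq, Fin.ext_iff]
      omega
    rw [if_neg hne1]
    by_cases h : i = k
    · have heq : (⟨2 * (i : ℕ) + 1, by have := i.isLt; omega⟩ : Fin n)
          = (⟨2 * (k : ℕ) + 1, by have := k.isLt; omega⟩ : Fin n) := by
        simp only [Fin.ext_iff, h]
      rw [if_pos heq, if_pos h, h]
      ring
    · have hne2 : (⟨2 * (i : ℕ) + 1, by have := i.isLt; omega⟩ : Fin n)
          ≠ (⟨2 * (k : ℕ) + 1, by have := k.isLt; omega⟩ : Fin n) := by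
        simp only [ne_eq, Fin.ext_iff]
        intro hc
        exact h (Fin.ext (by omega))
      rw [if_neg hne2, if_neg h]
      ring

end
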